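/- If η is a Gibbs process with Papangelou intensity κ and B is measurable with η(B) < ∞ almost surely, then E[Z_B(η)] = E[2^{η(B)}]. -/

import Mathlib

/-!
Write `K_m(ψ) = ∫_{B^m} κ_m(x, ψ) dλ^m(x)`. Splitting off the last point of `κ_{m+1}` and
applying the GNZ equation to it trades the integral over that point for a factor `η(B)` and a
shift `η(B) ↦ η(B) - 1`; by induction on `m`, `E[K_m(η)]` is the factorial moment
`E[η(B)(η(B)-1)⋯(η(B)-m+1)]`. For `η(B) = n` the series `Σ_m n(n-1)⋯(n-m+1)/m!` is
`Σ_m C(n,m) = 2^n`. That `η(B)` is almost surely an integer comes from the same shift: GNZ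
gives `E[η(B); η(B) ∈ A] = 0` whenever `η(B) + 1 ∉ A` a.s., which rules out non-integer values
below `k` by induction on `k`.
-/

open MeasureTheory ENNReal

attribute [local instance] Classical.propDecidable

namespace Gibbs

variable {X : Type*} [MeasurableSpace X]

noncomputable def diracSum (l : List X) : Measure X :=
  (l.map fun x => Measure.dirac x).sum

noncomputable def diracSumFin {m : ℕ} (v : Fin m → X) : Measure X :=
  ∑ i, Measure.dirac (v i)

noncomputable def kappaList (κ : X → Measure X → ℝ≥0∞) : List X → Measure X → ℝ≥0∞
  | [], _ => 1
  | x :: l, μ => κ x (μ + diracSum l) * kappaList κ l μ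

noncomputable def kappaFin (κ : X → Measure X → ℝ≥0∞) {m : ℕ}
    (v : Fin m → X) (μ : Measure X) : ℝ≥0∞ :=
  kappaList κ (List.ofFn v) μ

def Cocycle (κ : X → Measure X → ℝ≥0∞) : Prop :=
  ∀ (x y : X) (μ : Measure X),
    κ x μ * κ y (μ + Measure.dirac x) = κ y μ * κ x (μ + Measure.dirac y)

def IsLocalization (Bseq : ℕ → Set X) : Prop :=
  Monotone Bseq ∧ (∀ j, MeasurableSet (Bseq j)) ∧ (⋃ j, Bseq j) = Set.univ

def IsCounting (Bseq : ℕ → Set X) (μ : Measure X) : Prop :=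
  ∀ j, ∃ n : ℕ, μ (Bseq j) = n

structure IsFactorial (fact : Measure X → (m : ℕ) → Measure (Fin m → X)) : Prop where
  one : ∀ μ : Measure X, fact μ 1 = Measure.map (fun x => (fun _ : Fin 1 => x)) μ
  symm : ∀ (μ : Measure X) (m : ℕ) (σ : Equiv.Perm (Fin m)),
    Measure.map (fun v => v ∘ σ) (fact μ m) = fact μ m
  recur : ∀ (μ : Measure X) (m : ℕ) (A : Set (Fin (m + 1) → X)), MeasurableSet A →
    fact μ (m + 1) A =
      ∫⁻ v, (μ {x | Fin.snoc v x ∈ A}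
        - ∑ j : Fin m, Set.indicator A (fun _ => (1 : ℝ≥0∞)) (Fin.snoc v (v j))) ∂ fact μ m

noncomputable def enat (c : ℝ≥0∞) : ℕ := ⌊c.toReal⌋₊

noncomputable def elog (c : ℝ≥0∞) : EReal :=
  if c = 0 then ⊥ else if c = ⊤ then ⊤ else ((Real.log c.toReal : ℝ) : EReal)

noncomputable def eexp (x : EReal) : ℝ≥0∞ :=
  if x = ⊥ then 0 else if x = ⊤ then ⊤ else ENNReal.ofReal (Real.exp x.toReal)

noncomputable def hamiltonian (κ : X → Measure X → ℝ≥0∞)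
    (fact : Measure X → (m : ℕ) → Measure (Fin m → X)) (μ ψ : Measure X) : EReal :=
  if μ Set.univ = 0 then 0
  else if μ Set.univ = ⊤ then ⊤
  else - elog ((((enat (μ Set.univ)).factorial : ℝ≥0∞))⁻¹ *
    ∫⁻ v : Fin (enat (μ Set.univ)) → X, kappaFin κ v ψ ∂ fact μ (enat (μ Set.univ)))

noncomputable def partitionZ (κ : X → Measure X → ℝ≥0∞) (lam : Measure X)
    (B : Set X) (ψ : Measure X) : ℝ≥0∞ :=
  1 + ∑' m : ℕ, (((m + 1).factorial : ℝ≥0∞))⁻¹ *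
    ∫⁻ v : Fin (m + 1) → X, kappaFin κ v ψ ∂(Measure.pi fun _ : Fin (m + 1) => lam.restrict B)

noncomputable def kernelRestrict (κ : X → Measure X → ℝ≥0∞) (C : Set X) (ψ : Measure X) :
    X → Measure X → ℝ≥0∞ :=
  fun x μ => κ x (ψ + μ) * Set.indicator C (fun _ => (1 : ℝ≥0∞)) x

lemma diracSum_append (l l' : List X) : diracSum (l ++ l') = diracSum l + diracSum l' := by
  simp [diracSum]

lemma kappaList_concat (κ : X → Measure X → ℝ≥0∞) (l : List X) (x : X) (μ : Measure X) :
    kappaList κ (l ++ [x]) μ = kappaList κ l (μ + Measure.dirac x) * κ x μ := by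
  induction l generalizing μ with
  | nil => simp [kappaList, diracSum]
  | cons y l ih =>
    simp only [List.cons_append, kappaList, ih, diracSum_append, mul_assoc]
    rw [add_right_comm μ, add_assoc]
    simp [diracSum]

lemma kappaFin_snoc (κ : X → Measure X → ℝ≥0∞) {m : ℕ} (w : Fin m → X) (x : X)
    (μ : Measure X) :
    kappaFin κ (Fin.snoc w x) μ = kappaFin κ w (μ + Measure.dirac x) * κ x μ := by
  rw [kappaFin, List.ofFn_succ', List.concat_eq_append, kappaList_concat]
  simp [kappaFin]

@[simp] lemma kappaFin_zero (κ : X → Measure X → ℝ≥0∞) (v : Fin 0 → X) (μ : Measure X) :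
    kappaFin κ v μ = 1 := rfl

@[fun_prop] lemma Measurable.measure_apply {α : Type*} [MeasurableSpace α]
    {f : α → Measure X} (hf : Measurable f) {s : Set X} (hs : MeasurableSet s) :
    Measurable fun a => f a s :=
  (Measure.measurable_coe hs).comp hf

@[fun_prop] lemma Measurable.diracSum_ofFn {α : Type*} [MeasurableSpace α] {m : ℕ}
    {f : α → Fin m → X} (hf : Measurable f) :
    Measurable fun a => diracSum (List.ofFn (f a)) := by
  simp only [diracSum, List.map_ofFn, List.sum_ofFn]
  fun_prop

lemma measurable_kappaFin {κ : X → Measure X → ℝ≥0∞}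
    (hκ : Measurable fun p : X × Measure X => κ p.1 p.2) (m : ℕ) :
    Measurable fun p : (Fin m → X) × Measure X => kappaFin κ p.1 p.2 := by
  induction m with
  | zero => exact measurable_const
  | succ m ih =>
    simp only [kappaFin, List.ofFn_succ, kappaList]
    change Measurable fun p : (Fin (m + 1) → X) × Measure X =>
      κ _ _ * kappaFin κ (fun i => p.1 i.succ) p.2
    fun_prop

lemma lintegral_kappaFin_succ {κ : X → Measure X → ℝ≥0∞}
    (hκ : Measurable fun p : X × Measure X => κ p.1 p.2)
    (ν : Measure X) [SigmaFinite ν] (m : ℕ) (ψ : Measure X) :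
    ∫⁻ v, kappaFin κ v ψ ∂(Measure.pi fun _ : Fin (m + 1) => ν)
      = ∫⁻ w, ∫⁻ x, kappaFin κ w (ψ + Measure.dirac x) * κ x ψ ∂ν
          ∂(Measure.pi fun _ : Fin m => ν) := by
  have hKsucc := measurable_kappaFin hκ (m + 1)
  have hK := measurable_kappaFin hκ m
  rw [← ((measurePreserving_piFinSuccAbove (fun _ => ν) (Fin.last m)).symm).lintegral_comp
    (f := fun v => kappaFin κ v ψ) (by fun_prop)]
  simp_rw [MeasurableEquiv.piFinSuccAbove_symm_apply, Fin.insertNthEquiv, Equiv.coe_fn_mk,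
    Fin.insertNth_last', kappaFin_snoc]
  exact lintegral_prod_symm (fun z => kappaFin κ z.2 (ψ + Measure.dirac z.1) * κ z.1 ψ)
    (by fun_prop)

lemma IsLocalization.sigmaFinite {Bseq : ℕ → Set X} (hloc : IsLocalization Bseq)
    {lam : Measure X} (hlam : ∀ j, lam (Bseq j) ≠ ∞) : SigmaFinite lam :=
  ⟨⟨⟨Bseq, fun _ => trivial, fun j => (hlam j).lt_top, hloc.2.2⟩⟩⟩

-- `∏ k < j, (n - k)` is the falling factorial, as `ℝ≥0∞`-subtraction truncates at `0`.
lemma one_add_tsum_inv_factorial_mul_prod_sub (n : ℕ) :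
    1 + ∑' m : ℕ, (((m + 1).factorial : ℝ≥0∞))⁻¹ *
        ∏ k ∈ Finset.range (m + 1), ((n : ℝ≥0∞) - k) = 2 ^ n := by
  have hchoose (j : ℕ) : ((j.factorial : ℝ≥0∞))⁻¹ * ∏ k ∈ Finset.range j, ((n : ℝ≥0∞) - k)
      = n.choose j := by
    simp_rw [← ENNReal.natCast_sub, ← Nat.cast_prod, ← Nat.descFactorial_eq_prod_range,
      Nat.descFactorial_eq_factorial_mul_choose, Nat.cast_mul, ← mul_assoc]
    rw [ENNReal.inv_mul_cancel (by simp [Nat.factorial_ne_zero]) (ENNReal.natCast_ne_top _),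
      one_mul]
  simp_rw [hchoose]
  calc 1 + ∑' m : ℕ, (n.choose (m + 1) : ℝ≥0∞)
      = ∑' m : ℕ, (n.choose m : ℝ≥0∞) := by
        rw [tsum_eq_zero_add' (f := fun m => (n.choose m : ℝ≥0∞)) ENNReal.summable,
          Nat.choose_zero_right, Nat.cast_one]
    _ = ∑ m ∈ Finset.range (n + 1), (n.choose m : ℝ≥0∞) :=
        tsum_eq_sum fun m hm => by
          rw [Nat.choose_eq_zero_of_lt (by simpa using hm), Nat.cast_zero]
    _ = 2 ^ n := by exact_mod_cast Nat.sum_range_choose n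

lemma lintegral_one_add_tsum_const_mul {Ω : Type*} [MeasurableSpace Ω] {P : Measure Ω}
    [IsProbabilityMeasure P] (c : ℕ → ℝ≥0∞) {F : ℕ → Ω → ℝ≥0∞} (hF : ∀ m, Measurable (F m)) :
    ∫⁻ ω, 1 + ∑' m, c m * F m ω ∂P = 1 + ∑' m, c m * ∫⁻ ω, F m ω ∂P := by
  rw [lintegral_add_left measurable_const, lintegral_one, measure_univ,
    lintegral_tsum fun m => ((hF m).const_mul _).aemeasurable]
  simp_rw [lintegral_const_mul _ (hF _)]

def SatisfiesGNZ {Ω : Type*} [MeasurableSpace Ω] (P : Measure Ω) (η : Ω → Measure X)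
    (κ : X → Measure X → ℝ≥0∞) (lam : Measure X) : Prop :=
  ∀ f : X → Measure X → ℝ≥0∞, Measurable (fun p : X × Measure X => f p.1 p.2) →
    ∫⁻ ω, ∫⁻ x, f x (η ω) ∂(η ω) ∂P
      = ∫⁻ ω, ∫⁻ x, f x (η ω + Measure.dirac x) * κ x (η ω) ∂lam ∂P

namespace SatisfiesGNZ

variable {Ω : Type*} [MeasurableSpace Ω] {P : Measure Ω} {η : Ω → Measure X}
  {κ : X → Measure X → ℝ≥0∞} {lam : Measure X}

lemma lintegral_measure_apply_mul (hGNZ : SatisfiesGNZ P η κ lam) {B : Set X}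
    (hB : MeasurableSet B) {F : Measure X → ℝ≥0∞} (hF : Measurable F) :
    ∫⁻ ω, η ω B * F (η ω) ∂P
      = ∫⁻ ω, ∫⁻ x in B, F (η ω + Measure.dirac x) * κ x (η ω) ∂lam ∂P := by
  have h := hGNZ (fun x μ => B.indicator 1 x * F μ) (by fun_prop (disch := assumption))
  have hind (g : X → ℝ≥0∞) : (fun x => B.indicator 1 x * g x) = B.indicator g := by
    ext x; by_cases hx : x ∈ B <;> simp [hx]
  simp only [mul_assoc, hind, lintegral_indicator hB] at h
  simpa [mul_comm] using h

lemma ae_eq_zero_of_mem_of_ae_add_one_notMem (hGNZ : SatisfiesGNZ P η κ lam)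
    (hη : Measurable η) {B : Set X} (hB : MeasurableSet B) {A : Set ℝ≥0∞}
    (hA : MeasurableSet A) (h : ∀ᵐ ω ∂P, η ω B + 1 ∉ A) :
    ∀ᵐ ω ∂P, η ω B ∈ A → η ω B = 0 := by
  have hzero : ∫⁻ ω, η ω B * A.indicator 1 (η ω B) ∂P = 0 := by
    rw [hGNZ.lintegral_measure_apply_mul hB (F := fun μ => A.indicator 1 (μ B))
      (by fun_prop (disch := assumption))]
    refine lintegral_eq_zero_of_ae_eq_zero ?_
    filter_upwards [h] with ω hω
    refine (setLIntegral_congr_fun hB fun x hx => ?_).trans lintegral_zero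
    simp [Measure.add_apply, hB, hx, hω]
  filter_upwards [(lintegral_eq_zero_iff (by fun_prop (disch := assumption))).1 hzero]
    with ω hω hmem
  simpa [hmem] using hω

lemma ae_exists_nat_eq (hGNZ : SatisfiesGNZ P η κ lam) (hη : Measurable η) {B : Set X}
    (hB : MeasurableSet B) : ∀ᵐ ω ∂P, η ω B ≠ ∞ → ∃ n : ℕ, η ω B = n := by
  have hbelow (k : ℕ) : ∀ᵐ ω ∂P, η ω B < k → ∃ n : ℕ, η ω B = n := by
    induction k with
    | zero => simp
    | succ k ih =>
      have hA : MeasurableSet (Set.Iio ((k + 1 : ℕ) : ℝ≥0∞) ∩ (Set.range Nat.cast)ᶜ) :=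
        measurableSet_Iio.inter (Set.countable_range _).measurableSet.compl
      have h := hGNZ.ae_eq_zero_of_mem_of_ae_add_one_notMem hη hB hA <| by
        filter_upwards [ih] with ω hω ⟨hlt, hnat⟩
        obtain ⟨n, hn⟩ := hω (by simpa [ENNReal.add_lt_add_iff_right] using hlt)
        exact hnat ⟨n + 1, by simp [hn]⟩
      filter_upwards [h] with ω hω hlt
      by_contra hnat
      exact hnat ⟨0, by simpa using hω ⟨hlt, fun ⟨n, hn⟩ => hnat ⟨n, hn.symm⟩⟩⟩
  filter_upwards [ae_all_iff.2 hbelow] with ω hω hfin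
  obtain ⟨k, hk⟩ := ENNReal.exists_nat_gt hfin
  exact hω k hk

variable [SFinite P] [SigmaFinite lam]

lemma lintegral_comp_mul_lintegral_kappaFin_succ (hGNZ : SatisfiesGNZ P η κ lam)
    (hη : Measurable η) (hκ : Measurable fun p : X × Measure X => κ p.1 p.2) {B : Set X}
    (hB : MeasurableSet B) {G : ℝ≥0∞ → ℝ≥0∞} (hG : Measurable G) (m : ℕ) :
    ∫⁻ ω, G (η ω B) *
        ∫⁻ v, kappaFin κ v (η ω) ∂(Measure.pi fun _ : Fin (m + 1) => lam.restrict B) ∂P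
      = ∫⁻ ω, η ω B * G (η ω B - 1) *
          ∫⁻ v, kappaFin κ v (η ω) ∂(Measure.pi fun _ : Fin m => lam.restrict B) ∂P := by
  have hK := measurable_kappaFin hκ m
  calc _ = ∫⁻ ω, ∫⁻ w, ∫⁻ x in B,
          G (η ω B) * (kappaFin κ w (η ω + Measure.dirac x) * κ x (η ω))
          ∂lam ∂(Measure.pi fun _ : Fin m => lam.restrict B) ∂P := by
        refine lintegral_congr fun ω => ?_
        rw [lintegral_kappaFin_succ hκ, ← lintegral_const_mul _ (by fun_prop)]
        exact lintegral_congr fun w => (lintegral_const_mul _ (by fun_prop)).symm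
    _ = ∫⁻ w, ∫⁻ ω, ∫⁻ x in B,
          G (η ω B) * (kappaFin κ w (η ω + Measure.dirac x) * κ x (η ω))
          ∂lam ∂P ∂(Measure.pi fun _ : Fin m => lam.restrict B) :=
        lintegral_lintegral_swap (by fun_prop (disch := assumption))
    _ = ∫⁻ w, ∫⁻ ω, η ω B * (G (η ω B - 1) * kappaFin κ w (η ω))
          ∂P ∂(Measure.pi fun _ : Fin m => lam.restrict B) := by
        refine lintegral_congr fun w => ?_
        rw [hGNZ.lintegral_measure_apply_mul hB (F := fun μ => G (μ B - 1) * kappaFin κ w μ)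
          (by fun_prop (disch := assumption))]
        refine lintegral_congr fun ω => setLIntegral_congr_fun hB fun x hx => ?_
        simp [Measure.add_apply, hB, hx, mul_assoc]
    _ = _ := by
        rw [lintegral_lintegral_swap (by fun_prop (disch := assumption))]
        refine lintegral_congr fun ω => ?_
        rw [← lintegral_const_mul _ (by fun_prop)]
        simp_rw [mul_assoc]

lemma lintegral_comp_mul_lintegral_kappaFin (hGNZ : SatisfiesGNZ P η κ lam)
    (hη : Measurable η) (hκ : Measurable fun p : X × Measure X => κ p.1 p.2) {B : Set X}
    (hB : MeasurableSet B) (m : ℕ) {G : ℝ≥0∞ → ℝ≥0∞} (hG : Measurable G) :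
    ∫⁻ ω, G (η ω B) *
        ∫⁻ v, kappaFin κ v (η ω) ∂(Measure.pi fun _ : Fin m => lam.restrict B) ∂P
      = ∫⁻ ω, (∏ k ∈ Finset.range m, (η ω B - k)) * G (η ω B - m) ∂P := by
  induction m generalizing G with
  | zero => simp
  | succ m ih =>
    rw [hGNZ.lintegral_comp_mul_lintegral_kappaFin_succ hη hκ hB hG,
      ih (G := fun c => c * G (c - 1)) (by fun_prop)]
    simp_rw [Finset.prod_range_succ, tsub_tsub, Nat.cast_succ, mul_assoc]

lemma lintegral_lintegral_kappaFin (hGNZ : SatisfiesGNZ P η κ lam)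
    (hη : Measurable η) (hκ : Measurable fun p : X × Measure X => κ p.1 p.2) {B : Set X}
    (hB : MeasurableSet B) (m : ℕ) :
    ∫⁻ ω, ∫⁻ v, kappaFin κ v (η ω) ∂(Measure.pi fun _ : Fin m => lam.restrict B) ∂P
      = ∫⁻ ω, ∏ k ∈ Finset.range m, (η ω B - k) ∂P := by
  simpa using hGNZ.lintegral_comp_mul_lintegral_kappaFin hη hκ hB m (G := 1) measurable_const

end SatisfiesGNZ

theorem expectation_partitionZ_eq_expectation_two_pow_general
    {Ω : Type*} [MeasurableSpace Ω] (P : Measure Ω) [IsProbabilityMeasure P]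
    (Bseq : ℕ → Set X) (hloc : IsLocalization Bseq)
    (lam : Measure X) (hlam : ∀ j, lam (Bseq j) ≠ ⊤)
    (κ : X → Measure X → ℝ≥0∞)
    (hκmeas : Measurable fun p : X × Measure X => κ p.1 p.2)
    (η : Ω → Measure X) (hηmeas : Measurable η)
    (hGNZ : ∀ f : X → Measure X → ℝ≥0∞,
      Measurable (fun p : X × Measure X => f p.1 p.2) →
      ∫⁻ ω, ∫⁻ x, f x (η ω) ∂(η ω) ∂P
        = ∫⁻ ω, ∫⁻ x, f x (η ω + Measure.dirac x) * κ x (η ω) ∂lam ∂P)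
    (B : Set X) (hB : MeasurableSet B) (hfinB : ∀ᵐ ω ∂P, η ω B < ⊤) :
    ∫⁻ ω, partitionZ κ lam B (η ω) ∂P
      = ∫⁻ ω, (if η ω B = ⊤ then (⊤ : ℝ≥0∞) else (2 : ℝ≥0∞) ^ enat (η ω B)) ∂P := by
  have := hloc.sigmaFinite hlam
  have hK (m : ℕ) : Measurable fun ω =>
      ∫⁻ v, kappaFin κ v (η ω) ∂(Measure.pi fun _ : Fin m => lam.restrict B) := by
    have := measurable_kappaFin hκmeas m
    fun_prop
  calc ∫⁻ ω, partitionZ κ lam B (η ω) ∂P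
      = 1 + ∑' m : ℕ, (((m + 1).factorial : ℝ≥0∞))⁻¹ *
          ∫⁻ ω, ∏ k ∈ Finset.range (m + 1), (η ω B - k) ∂P := by
        simp only [partitionZ]
        rw [lintegral_one_add_tsum_const_mul _ fun m => hK (m + 1)]
        simp_rw [SatisfiesGNZ.lintegral_lintegral_kappaFin hGNZ hηmeas hκmeas hB]
    _ = ∫⁻ ω, 1 + ∑' m : ℕ, (((m + 1).factorial : ℝ≥0∞))⁻¹ *
          ∏ k ∈ Finset.range (m + 1), (η ω B - k) ∂P :=
        (lintegral_one_add_tsum_const_mul _ fun m => by fun_prop (disch := assumption)).symm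
    _ = _ := by
        refine lintegral_congr_ae ?_
        filter_upwards [SatisfiesGNZ.ae_exists_nat_eq hGNZ hηmeas hB, hfinB] with ω hnat hfin
        obtain ⟨n, hn⟩ := hnat hfin.ne
        simp [hn, one_add_tsum_inv_factorial_mul_prod_sub, enat]

theorem expectation_partitionZ_eq_expectation_two_pow
    {Ω : Type*} [MeasurableSpace Ω] (P : Measure Ω) [IsProbabilityMeasure P]
    (Bseq : ℕ → Set X) (hloc : IsLocalization Bseq)
    (lam : Measure X) (hlam : ∀ j, lam (Bseq j) ≠ ⊤)
    (κ : X → Measure X → ℝ≥0∞)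
    (hκmeas : Measurable fun p : X × Measure X => κ p.1 p.2)
    (hκfin : ∀ (x : X) (μ : Measure X), κ x μ ≠ ⊤)
    (hcoc : Cocycle κ)
    (η : Ω → Measure X) (hηmeas : Measurable η)
    (hcount : ∀ ω, IsCounting Bseq (η ω))
    (hGNZ : ∀ f : X → Measure X → ℝ≥0∞,
      Measurable (fun p : X × Measure X => f p.1 p.2) →
      ∫⁻ ω, ∫⁻ x, f x (η ω) ∂(η ω) ∂P
        = ∫⁻ ω, ∫⁻ x, f x (η ω + Measure.dirac x) * κ x (η ω) ∂lam ∂P)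
    (B : Set X) (hB : MeasurableSet B) (hfinB : ∀ᵐ ω ∂P, η ω B < ⊤) :
    ∫⁻ ω, partitionZ κ lam B (η ω) ∂P
      = ∫⁻ ω, (if η ω B = ⊤ then (⊤ : ℝ≥0∞) else (2 : ℝ≥0∞) ^ enat (η ω B)) ∂P :=
  expectation_partitionZ_eq_expectation_two_pow_general P Bseq hloc lam hlam κ hκmeas η hηmeas hGNZ
    B hB hfinB

end Gibbs
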